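/- Let X_i be an increasing sequence of finite subsets of a compact set X ⊂ ℝ^N converging to X in the Hausdorff distance, let σ: X → S^{N-1} be continuous with σ(x) ∈ N_x X when N_x X ≠ ∅, and θ ∈ (0,π). Then the indicator functions satisfy χ_{N^{σ,θ}X} ≥ limsup_i χ_{N^{σ,θ}X_i} pointwise on S^{N-1}; i.e., any direction ν belonging to N^{σ,θ}X_{i_n} for infinitely many n belongs to N^{σ,θ}X. -/
import Mathlib


open MeasureTheory Metric Set Filter
open scoped RealInnerProductSpace ENNReal NNReal Pointwise symmDiff Topology

noncomputable section

abbrev Euc (N : ℕ) := EuclideanSpace ℝ (Fin N)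

/-- Points where `E` has Lebesgue density `t`. -/
def pointsOfDensity {N : ℕ} (E : Set (Euc N)) (t : ℝ≥0∞) : Set (Euc N) :=
  {x | Tendsto (fun r : ℝ => volume (E ∩ ball x r) / volume (ball x r)) (𝓝[>] 0) (𝓝 t)}

/-- The essential (measure-theoretic) boundary `∂^e E`. -/
def essBnd {N : ℕ} (E : Set (Euc N)) : Set (Euc N) :=
  (pointsOfDensity E 0 ∪ pointsOfDensity E 1)ᶜ

/-- Relative perimeter `P(E; A) = H^{N-1}(∂^e E ∩ A)` (Federer's characterization). -/
def per {N : ℕ} (E A : Set (Euc N)) : ℝ≥0∞ :=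
  μH[(N : ℝ) - 1] (essBnd E ∩ A)

/-- `E` is a set of finite perimeter. -/
def FinitePerimeter {N : ℕ} (E : Set (Euc N)) : Prop := per E univ < ⊤

/-- Unit normal cone of a set at a point: unit normals of support hyperplanes at `x`. -/
def unitNormalCone {N : ℕ} (X : Set (Euc N)) (x : Euc N) : Set (Euc N) :=
  {ν | ‖ν‖ = 1 ∧ ∀ y ∈ X, ⟪y - x, ν⟫ ≤ 0}

/-- Spherical cap `S_{θ,v}` of angle `θ` around a unit vector `v`. -/
def cap {N : ℕ} (θ : ℝ) (v : Euc N) : Set (Euc N) :=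
  {y | ‖y‖ = 1 ∧ Real.cos θ ≤ ⟪v, y⟫}

def lastCoord (N : ℕ) (h : 0 < N) : Fin N := ⟨N - 1, Nat.sub_lt h one_pos⟩

/-- The spherical cap `S_θ` around the north pole `e_N`. -/
def Scap (N : ℕ) (h : 0 < N) (θ : ℝ) : Set (Euc N) :=
  cap θ (EuclideanSpace.single (lastCoord N h) 1)

/-- `ω_N`, the volume of the unit ball in `ℝ^N`. -/
def unitBallVol (N : ℕ) : ℝ≥0∞ := volume (ball (0 : Euc N) 1)

/-- The minimizing great-circle arc between two (non-antipodal) unit vectors. -/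
def arc {N : ℕ} (x y : Euc N) : Set (Euc N) :=
  {z | ‖z‖ = 1 ∧ ∃ a b : ℝ, 0 ≤ a ∧ 0 ≤ b ∧ z = a • x + b • y}

/-- `X ⊆ S^{N-1}` is spherically (geodesically) convex: any two points of `X` are joined
by some distance-minimizing great circle arc contained in `X`. -/
def SphConvex {N : ℕ} (X : Set (Euc N)) : Prop :=
  (∀ x ∈ X, ‖x‖ = 1) ∧
  ∀ x ∈ X, ∀ y ∈ X,
    (x ≠ -y → arc x y ⊆ X) ∧
    (x = -y → ∃ w : Euc N, ‖w‖ = 1 ∧ arc x w ∪ arc w y ⊆ X)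

/-- The restricted normal bundle `N^{σ,θ} X = ⋃_{x ∈ X} (N_x X ∩ S_{θ,σ(x)})`. -/
def resNB {N : ℕ} (X : Set (Euc N)) (σ : Euc N → Euc N) (θ : ℝ) : Set (Euc N) :=
  ⋃ x ∈ X, unitNormalCone X x ∩ cap θ (σ x)

/-- Total positive curvature `K^+(Σ) = H^{N-1}(⋃_{x ∈ Σ \ C} N_x Σ)`. -/
def totPosCurv {N : ℕ} (C S : Set (Euc N)) : ℝ≥0∞ :=
  μH[(N : ℝ) - 1] (⋃ x ∈ S \ C, unitNormalCone S x)

/-- `x` is an exposed point of `X`: some support hyperplane meets `X` only at `x`. -/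
def IsExposedPt {N : ℕ} (X : Set (Euc N)) (x : Euc N) : Prop :=
  ∃ ν ∈ unitNormalCone X x, ∀ y ∈ X, y ≠ x → ⟪y - x, ν⟫ < 0

/-- The width of a set: distance between the closest pair of parallel hyperplanes
enclosing it. -/
def widthSet {N : ℕ} (X : Set (Euc N)) : ℝ :=
  ⨅ ν : {v : Euc N // ‖v‖ = 1},
    (sSup ((fun y => ⟪y, (ν : Euc N)⟫) '' X) - sInf ((fun y => ⟪y, (ν : Euc N)⟫) '' X))

/-- Restricted `(Λ, r₀)`-minimizer of the relative perimeter outside `C`. -/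
def RestrictedMinimizer {N : ℕ} (C E : Set (Euc N)) (Λ r0 : ℝ) : Prop :=
  E ⊆ Cᶜ ∧ ∀ F : Set (Euc N), F ⊆ Cᶜ → Metric.diam (E ∆ F) ≤ r0 →
    μH[(N : ℝ) - 1] ((essBnd F ∩ C) \ (essBnd E ∩ C)) = 0 →
    per E Cᶜ ≤ per F Cᶜ + ENNReal.ofReal Λ * volume (E ∆ F)

/-- `V` has Lipschitz boundary: locally the frontier is a Lipschitz graph. -/
def LipGraphBoundary {N : ℕ} (V : Set (Euc N)) : Prop :=
  ∀ x ∈ frontier V, ∃ ν : Euc N, ‖ν‖ = 1 ∧ ∃ ε > 0, ∃ K : ℝ,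
    ∀ y ∈ frontier V ∩ ball x ε, ∀ z ∈ frontier V ∩ ball x ε,
      |⟪y - z, ν⟫| ≤ K * ‖(y - z) - ⟪y - z, ν⟫ • ν‖

/-- The open cube `Q_r(0) = (-r, r)^N`. -/
def Qcube (N : ℕ) (r : ℝ) : Set (Euc N) := {x | ∀ i, |x i| < r}

/-- upper semicontinuity of the restricted normal bundle along an
increasing sequence of finite sets converging in the Hausdorff distance. -/
theorem resNB_limsup_of_hausdorff {N : ℕ} (X : Set (Euc N)) (hXcp : IsCompact X)
    (Xi : ℕ → Set (Euc N)) (hfin : ∀ i, (Xi i).Finite) (hmono : Monotone Xi)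
    (hsub : ∀ i, Xi i ⊆ X)
    (hconv : Tendsto (fun i => hausdorffDist (Xi i) X) atTop (𝓝 0))
    (σ : Euc N → Euc N) (hσcont : ContinuousOn σ X)
    (hσ : ∀ x ∈ X, (unitNormalCone X x).Nonempty → σ x ∈ unitNormalCone X x)
    (θ : ℝ) (hθ : θ ∈ Ioo 0 Real.pi) (ν : Euc N)
    (hν : ∃ᶠ i in atTop, ν ∈ resNB (Xi i) σ θ) :
    ν ∈ resNB X σ θ := by
  obtain ⟨φ, hφ, hmem⟩ := Filter.extraction_of_frequently_atTop hν
  have H : ∀ n, ∃ x ∈ Xi (φ n), ν ∈ unitNormalCone (Xi (φ n)) x ∧ ν ∈ cap θ (σ x) := by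
    intro n
    have h := hmem n
    simp only [resNB, mem_iUnion, mem_inter_iff] at h
    obtain ⟨x, hx, h1, h2⟩ := h
    exact ⟨x, hx, h1, h2⟩
  choose x hx hcone hcap using H
  have hxX : ∀ n, x n ∈ X := fun n => hsub _ (hx n)
  obtain ⟨a, haX, ψ, hψ, hlim⟩ := hXcp.tendsto_subseq hxX
  have hXne : X.Nonempty := ⟨x 0, hxX 0⟩
  have hne : ∀ k, (Xi (φ (ψ k))).Nonempty := fun k => ⟨x (ψ k), hx (ψ k)⟩
  have hEd : ∀ k, EMetric.hausdorffEdist X (Xi (φ (ψ k))) ≠ ⊤ := fun k =>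
    Metric.hausdorffEdist_ne_top_of_nonempty_of_bounded hXne (hne k) hXcp.isBounded
      (hXcp.isBounded.subset (hsub _))
  have hdist0 : Tendsto (fun k => hausdorffDist (Xi (φ (ψ k))) X) atTop (𝓝 0) :=
    hconv.comp ((hφ.comp hψ).tendsto_atTop)
  have hnorm : ‖ν‖ = 1 := (hcone (ψ 0)).1
  -- the cone condition in the limit
  have hconeX : ∀ y ∈ X, ⟪y - a, ν⟫ ≤ 0 := by
    intro y hy
    have hz : ∀ k, ∃ z ∈ Xi (φ (ψ k)), Metric.infDist y (Xi (φ (ψ k))) = dist y z :=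
      fun k => ((hfin _).isCompact).exists_infDist_eq_dist (hne k) y
    choose z hzmem hzd using hz
    have hzy : Tendsto z atTop (𝓝 y) := by
      rw [tendsto_iff_dist_tendsto_zero]
      apply squeeze_zero (fun k => dist_nonneg)
        (g := fun k => hausdorffDist (Xi (φ (ψ k))) X) _ hdist0
      intro k
      rw [dist_comm, ← hzd k]
      calc Metric.infDist y (Xi (φ (ψ k))) ≤ hausdorffDist X (Xi (φ (ψ k))) :=
            Metric.infDist_le_hausdorffDist_of_mem hy (hEd k)
        _ = hausdorffDist (Xi (φ (ψ k))) X := hausdorffDist_comm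
    have hk : ∀ k, ⟪z k - x (ψ k), ν⟫ ≤ 0 := fun k => (hcone (ψ k)).2 (z k) (hzmem k)
    have htend : Tendsto (fun k => ⟪z k - x (ψ k), ν⟫) atTop (𝓝 ⟪y - a, ν⟫) :=
      (hzy.sub hlim).inner tendsto_const_nhds
    exact le_of_tendsto htend (Filter.Eventually.of_forall hk)
  -- continuity of σ along the subsequence
  have hxψ : Tendsto (fun k => x (ψ k)) atTop (𝓝[X] a) :=
    tendsto_nhdsWithin_iff.mpr ⟨hlim, Filter.Eventually.of_forall fun k => hxX (ψ k)⟩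
  have hσtend : Tendsto (fun k => σ (x (ψ k))) atTop (𝓝 (σ a)) :=
    (hσcont a haX).tendsto.comp hxψ
  have hcapX : Real.cos θ ≤ ⟪σ a, ν⟫ := by
    have htend : Tendsto (fun k => ⟪σ (x (ψ k)), ν⟫) atTop (𝓝 ⟪σ a, ν⟫) :=
      hσtend.inner tendsto_const_nhds
    exact ge_of_tendsto htend (Filter.Eventually.of_forall fun k => (hcap (ψ k)).2)
  simp only [resNB, mem_iUnion, mem_inter_iff]
  exact ⟨a, haX, ⟨hnorm, hconeX⟩, ⟨hnorm, hcapX⟩⟩
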